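/- arXiv:2004.05599 — 3 statements merged into one kernel-verified Lean document; each statement's English description precedes it below -/
import Mathlib

section
/- Let {z_s}_{s=1}^t be non-negative reals, σ > 0, β > 0, and let g : ℝ_+ → [0,1] be non-increasing with g(u) ≤ C₁ exp(−u²/2) for all u ≥ 0, for some constant C₁ > 0. Define w_s = g(z_s/σ) and w̃_s = w_s / (β + Σ_{s'=1}^t w_{s'}). Then Σ_{s=1}^t w̃_s z_s ≤ 2σ (1 + sqrt(log(C₁ t/β + e))). -/
open Finset Real

/-!
Put `L = log (C₁ t / β + e)` and `τ = 2σ√L`. Atoms with `z_s ≤ τ` contribute at most `τ` to the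
normalized average. For an atom with `z_s > τ`, writing `u = z_s / σ`, the Gaussian decay gives
`w_s z_s ≤ σ C₁ u e^{-u²/2} ≤ σ C₁ e^{-u²/4} ≤ σ C₁ e^{-L}`, so after dividing by at least `β` the
`t` such atoms contribute at most `σ (C₁ t / β) e^{-L} ≤ σ`.
-/

lemma mul_exp_neg_sq_div_two_le_exp_neg_sq_div_four (u : ℝ) :
    u * exp (-u ^ 2 / 2) ≤ exp (-u ^ 2 / 4) := by
  have hu : u ≤ exp (u ^ 2 / 4) := by
    nlinarith [add_one_le_exp (u ^ 2 / 4), sq_nonneg (u / 2 - 1)]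
  calc u * exp (-u ^ 2 / 2) ≤ exp (u ^ 2 / 4) * exp (-u ^ 2 / 2) := by gcongr
    _ = exp (-u ^ 2 / 4) := by rw [← exp_add]; ring_nf

lemma mul_le_exp_neg_of_le_gaussian {a u C L : ℝ} (hu : 0 ≤ u) (hC : 0 ≤ C)
    (ha : a ≤ C * exp (-u ^ 2 / 2)) (hL : 4 * L ≤ u ^ 2) :
    u * a ≤ C * exp (-L) :=
  calc u * a ≤ u * (C * exp (-u ^ 2 / 2)) := by gcongr
    _ = C * (u * exp (-u ^ 2 / 2)) := by ring
    _ ≤ C * exp (-u ^ 2 / 4) := by gcongr; exact mul_exp_neg_sq_div_two_le_exp_neg_sq_div_four u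
    _ ≤ C * exp (-L) := by gcongr; linarith

lemma sum_div_mul_le_of_tail {ι : Type*} [Fintype ι] (w z : ι → ℝ) {β τ ε : ℝ}
    (hβ : 0 < β) (hτ : 0 ≤ τ) (hε : 0 ≤ ε) (hw : ∀ s, 0 ≤ w s)
    (htail : ∀ s, τ < z s → w s * z s ≤ ε) :
    ∑ s, w s / (β + ∑ s', w s') * z s ≤ τ + Fintype.card ι * ε / β := by
  set W := ∑ s', w s'
  have hW : 0 ≤ W := sum_nonneg fun s _ => hw s
  have hD : β ≤ β + W := by linarith
  have hterm : ∀ s, w s / (β + W) * z s ≤ w s / (β + W) * τ + ε / β := by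
    intro s
    have hwD : 0 ≤ w s / (β + W) := div_nonneg (hw s) (by linarith)
    rcases le_or_gt (z s) τ with hz | hz
    · have : 0 ≤ ε / β := div_nonneg hε hβ.le
      nlinarith
    · have hwz : 0 ≤ w s * z s := mul_nonneg (hw s) (by linarith)
      calc w s / (β + W) * z s = w s * z s / (β + W) := div_mul_eq_mul_div _ _ _
        _ ≤ w s * z s / β := div_le_div_of_nonneg_left hwz hβ hD
        _ ≤ ε / β := by gcongr; exact htail s hz
        _ ≤ w s / (β + W) * τ + ε / β := by nlinarith
  have hfrac : W / (β + W) ≤ 1 := (div_le_one (by linarith)).mpr (by linarith)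
  calc ∑ s, w s / (β + W) * z s ≤ ∑ s, (w s / (β + W) * τ + ε / β) :=
        sum_le_sum fun s _ => hterm s
    _ = W / (β + W) * τ + Fintype.card ι * (ε / β) := by
        rw [sum_add_distrib, ← sum_mul, ← sum_div, sum_const, card_univ, nsmul_eq_mul]
    _ ≤ τ + Fintype.card ι * ε / β := by rw [mul_div_assoc]; nlinarith

theorem kernel_weighted_bias_bound_general
    (t : ℕ) (z : Fin t → ℝ) (hz : ∀ s, 0 ≤ z s)
    (σ β C₁ : ℝ) (hσ : 0 < σ) (hβ : 0 < β) (hC : 0 < C₁)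
    (g : ℝ → ℝ)
    (hg01 : ∀ u, 0 ≤ u → g u ∈ Set.Icc (0 : ℝ) 1)
    (hgauss : ∀ u, 0 ≤ u → g u ≤ C₁ * Real.exp (-u ^ 2 / 2)) :
    ∑ s, (g (z s / σ) / (β + ∑ s', g (z s' / σ))) * z s ≤
      2 * σ * (1 + Real.sqrt (Real.log (C₁ * t / β + Real.exp 1))) := by
  set A := C₁ * t / β
  set L := log (A + exp 1)
  have hA : 0 ≤ A := by positivity
  have hL : 0 ≤ L := log_nonneg (by linarith [add_one_le_exp (1 : ℝ)])
  have hAL : A * exp (-L) ≤ 1 := by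
    rw [exp_neg, exp_log (by positivity), ← div_eq_mul_inv, div_le_one (by positivity)]
    linarith [exp_pos 1]
  have htail : ∀ s, 2 * σ * √L < z s → g (z s / σ) * z s ≤ σ * C₁ * exp (-L) := by
    intro s hs
    have hu : 0 ≤ z s / σ := div_nonneg (hz s) hσ.le
    have hLu : 4 * L ≤ (z s / σ) ^ 2 := by
      have : 2 * √L ≤ z s / σ := by rw [le_div_iff₀ hσ]; linarith
      nlinarith [sq_sqrt hL, sqrt_nonneg L]
    have hdecay := mul_le_exp_neg_of_le_gaussian hu hC.le (hgauss _ hu) hLu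
    calc g (z s / σ) * z s = σ * (z s / σ * g (z s / σ)) := by field_simp
      _ ≤ σ * C₁ * exp (-L) := by rw [mul_assoc]; gcongr
  have hbound := sum_div_mul_le_of_tail (fun s => g (z s / σ)) z hβ (by positivity)
    (by positivity) (fun s => (hg01 _ (div_nonneg (hz s) hσ.le)).1) htail
  have htailsum : (Fintype.card (Fin t) : ℝ) * (σ * C₁ * exp (-L)) / β ≤ σ := by
    rw [Fintype.card_fin, show (t : ℝ) * (σ * C₁ * exp (-L)) / β = σ * (A * exp (-L)) by
      simp only [A]; field_simp]
    exact mul_le_of_le_one_right hσ.le hAL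
  calc _ ≤ 2 * σ * √L + σ := by linarith
    _ ≤ 2 * σ * (1 + √L) := by nlinarith

/-- Kernel bias lemma: the normalized kernel-weighted average of the distances is
bounded by `2σ(1 + sqrt(log(C₁ t/β + e)))`. -/
theorem kernel_weighted_bias_bound
    (t : ℕ) (ht : 1 ≤ t) (z : Fin t → ℝ) (hz : ∀ s, 0 ≤ z s)
    (σ β C₁ : ℝ) (hσ : 0 < σ) (hβ : 0 < β) (hC : 0 < C₁)
    (g : ℝ → ℝ)
    (hg01 : ∀ u, 0 ≤ u → g u ∈ Set.Icc (0 : ℝ) 1)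
    (hmono : ∀ u v, 0 ≤ u → u ≤ v → g v ≤ g u)
    (hgauss : ∀ u, 0 ≤ u → g u ≤ C₁ * Real.exp (-u ^ 2 / 2)) :
    ∑ s, (g (z s / σ) / (β + ∑ s', g (z s' / σ))) * z s ≤
      2 * σ * (1 + Real.sqrt (Real.log (C₁ * t / β + Real.exp 1))) :=
  kernel_weighted_bias_bound_general t z hz σ β C₁ hσ hβ hC g hg01 hgauss
end

section
/- Let {y_s}_{s=1}^t be reals, σ, β > 0, and let g : ℝ_+ → [0,1] be differentiable with |g'(u)| ≤ C₂ for all u (for some C₂ > 0). Define f₁ : ℝ_+^t → ℝ by f₁(z) = (Σ_{s=1}^t g(z_s/σ) y_s)/(β + Σ_{s=1}^t g(z_s/σ)). Then f₁ is Lipschitz with respect to the sup norm on ℝ_+^t with Lipschitz constant at most 2 C₂ t (max_s |y_s|)/(β σ). -/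
open Finset

/-- Lipschitz continuity (w.r.t. the sup norm on `ℝ₊^t`) of the normalized
kernel regression estimate `f₁(z) = Σ g(z_s/σ) y_s / (β + Σ g(z_s/σ))`. -/
theorem kernel_estimate_lipschitz_f1
    (t : ℕ) (ht : 1 ≤ t) (y : Fin t → ℝ) (σ β C₂ : ℝ)
    (hσ : 0 < σ) (hβ : 0 < β) (hC : 0 < C₂)
    (g g' : ℝ → ℝ) (hderiv : ∀ u, HasDerivAt g (g' u) u)
    (hg' : ∀ u, |g' u| ≤ C₂)
    (hg01 : ∀ u, 0 ≤ u → g u ∈ Set.Icc (0 : ℝ) 1) :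
    ∀ z z' : Fin t → ℝ, (∀ s, 0 ≤ z s) → (∀ s, 0 ≤ z' s) →
      |(∑ s, g (z s / σ) * y s) / (β + ∑ s, g (z s / σ)) -
          (∑ s, g (z' s / σ) * y s) / (β + ∑ s, g (z' s / σ))| ≤
        (2 * C₂ * t *
            (Finset.univ.sup' (Finset.univ_nonempty_iff.mpr (Fin.pos_iff_nonempty.mp ht))
              (fun s => |y s|)) / (β * σ)) * dist z z' := by
  intro z z' hz hz'
  set M := Finset.univ.sup' (Finset.univ_nonempty_iff.mpr (Fin.pos_iff_nonempty.mp ht))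
      (fun s => |y s|) with hM
  have hMy : ∀ s, |y s| ≤ M := fun s => Finset.le_sup' (fun s => |y s|) (Finset.mem_univ s)
  have hM0 : 0 ≤ M := le_trans (abs_nonneg _) (hMy ⟨0, ht⟩)
  -- Lipschitz bound for g
  have hgLip : ∀ a b : ℝ, |g a - g b| ≤ C₂ * |a - b| := by
    intro a b
    have := Convex.norm_image_sub_le_of_norm_hasDerivWithin_le
      (f := g) (f' := g') (C := C₂) (s := (Set.univ : Set ℝ))
      (fun x _ => (hderiv x).hasDerivWithinAt)
      (fun x _ => by simpa [Real.norm_eq_abs] using hg' x)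
      convex_univ (Set.mem_univ b) (Set.mem_univ a)
    simpa [Real.norm_eq_abs] using this
  set d := dist z z' with hd
  have hd0 : 0 ≤ d := dist_nonneg
  have hzd : ∀ s, |z s / σ - z' s / σ| ≤ d / σ := by
    intro s
    rw [div_sub_div_same, abs_div, abs_of_pos hσ]
    have : |z s - z' s| ≤ d := by
      have := dist_le_pi_dist z z' s
      simpa [Real.dist_eq, hd] using this
    gcongr
  have hgz : ∀ s, g (z s / σ) ∈ Set.Icc (0:ℝ) 1 :=
    fun s => hg01 _ (div_nonneg (hz s) hσ.le)
  have hgz' : ∀ s, g (z' s / σ) ∈ Set.Icc (0:ℝ) 1 :=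
    fun s => hg01 _ (div_nonneg (hz' s) hσ.le)
  set A := ∑ s, g (z s / σ) * y s with hA
  set A' := ∑ s, g (z' s / σ) * y s with hA'
  set B := ∑ s, g (z s / σ) with hB
  set B' := ∑ s, g (z' s / σ) with hB'
  have hB0 : (0:ℝ) ≤ B := Finset.sum_nonneg fun s _ => (hgz s).1
  have hB'0 : (0:ℝ) ≤ B' := Finset.sum_nonneg fun s _ => (hgz' s).1
  have hβB : (0:ℝ) < β + B := by linarith
  have hβB' : (0:ℝ) < β + B' := by linarith
  have hAle : |A| ≤ M * B := by
    calc |A| ≤ ∑ s, |g (z s / σ) * y s| := Finset.abs_sum_le_sum_abs _ _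
      _ ≤ ∑ s, g (z s / σ) * M := by
          refine Finset.sum_le_sum fun s _ => ?_
          rw [abs_mul, abs_of_nonneg (hgz s).1]
          exact mul_le_mul_of_nonneg_left (hMy s) (hgz s).1
      _ = M * B := by rw [hB, Finset.mul_sum]; exact Finset.sum_congr rfl fun s _ => mul_comm _ _
  have hAdiff : |A - A'| ≤ (t : ℝ) * (C₂ * (d / σ) * M) := by
    rw [hA, hA', ← Finset.sum_sub_distrib]
    calc |∑ s, (g (z s / σ) * y s - g (z' s / σ) * y s)|
        ≤ ∑ s, |g (z s / σ) * y s - g (z' s / σ) * y s| := Finset.abs_sum_le_sum_abs _ _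
      _ ≤ ∑ _s : Fin t, C₂ * (d / σ) * M := by
          refine Finset.sum_le_sum fun s _ => ?_
          rw [← sub_mul, abs_mul]
          have h1 : |g (z s / σ) - g (z' s / σ)| ≤ C₂ * (d / σ) :=
            le_trans (hgLip _ _) (by
              have := hzd s
              nlinarith [abs_nonneg (z s / σ - z' s / σ)])
          exact mul_le_mul h1 (hMy s) (abs_nonneg _)
            (by positivity)
      _ = (t : ℝ) * (C₂ * (d / σ) * M) := by
          rw [Finset.sum_const, Finset.card_univ, Fintype.card_fin, nsmul_eq_mul]
  have hBdiff : |B' - B| ≤ (t : ℝ) * (C₂ * (d / σ)) := by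
    rw [hB, hB', ← Finset.sum_sub_distrib]
    calc |∑ s, (g (z' s / σ) - g (z s / σ))|
        ≤ ∑ s, |g (z' s / σ) - g (z s / σ)| := Finset.abs_sum_le_sum_abs _ _
      _ ≤ ∑ _s : Fin t, C₂ * (d / σ) := by
          refine Finset.sum_le_sum fun s _ => ?_
          refine le_trans (hgLip _ _) ?_
          have := hzd s
          rw [abs_sub_comm] at this
          nlinarith [abs_nonneg (z' s / σ - z s / σ)]
      _ = (t : ℝ) * (C₂ * (d / σ)) := by
          rw [Finset.sum_const, Finset.card_univ, Fintype.card_fin, nsmul_eq_mul]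
  have key : A / (β + B) - A' / (β + B') =
      (A - A') / (β + B') + (A / (β + B)) * ((B' - B) / (β + B')) := by
    field_simp
    ring
  have hT1 : |(A - A') / (β + B')| ≤ ((t : ℝ) * (C₂ * (d / σ) * M)) / β := by
    rw [abs_div, abs_of_pos hβB']
    exact div_le_div₀ (by positivity) hAdiff hβ (by linarith)
  have hT2a : |A / (β + B)| ≤ M := by
    rw [abs_div, abs_of_pos hβB]
    rw [div_le_iff₀ hβB]
    nlinarith
  have hT2b : |(B' - B) / (β + B')| ≤ ((t : ℝ) * (C₂ * (d / σ))) / β := by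
    rw [abs_div, abs_of_pos hβB']
    exact div_le_div₀ (by positivity) hBdiff hβ (by linarith)
  have hT2 : |(A / (β + B)) * ((B' - B) / (β + B'))| ≤
      M * (((t : ℝ) * (C₂ * (d / σ))) / β) := by
    rw [abs_mul]
    exact mul_le_mul hT2a hT2b (abs_nonneg _) hM0
  calc |A / (β + B) - A' / (β + B')|
      ≤ |(A - A') / (β + B')| + |(A / (β + B)) * ((B' - B) / (β + B'))| := by
        rw [key]; exact abs_add_le _ _
    _ ≤ ((t : ℝ) * (C₂ * (d / σ) * M)) / β + M * (((t : ℝ) * (C₂ * (d / σ))) / β) :=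
        add_le_add hT1 hT2
    _ = (2 * C₂ * t * M / (β * σ)) * d := by
        field_simp
        ring
end

section
/- Consider a finite-horizon MDP with horizon H on a metric state-action space, where for each h the reward r_h : X×A → [0,1] is λ_r-Lipschitz and the transition kernel satisfies W₁(P_h(·|x,a), P_h(·|x',a')) ≤ λ_p ρ((x,a),(x',a')) (W₁ the 1-Wasserstein distance), and ρ((x,a),(x',a')) = ρ_X(x,x') + ρ_A(a,a'). Then for every h ∈ [H], the optimal Q-function Q_h* is L_h-Lipschitz with respect to ρ, where L_h = Σ_{h'=h}^H λ_r λ_p^{H−h'}. -/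
open MeasureTheory Finset

lemma aux_sum_step_mdp (lr lp : ℝ) {h H : ℕ} (hhH : h < H) :
    ∑ h' ∈ Icc h H, lr * lp ^ (H - h') =
      lr + lp * ∑ h' ∈ Icc (h+1) H, lr * lp ^ (H - h') := by
  set n := H - h with hn
  have hL : ∑ h' ∈ Icc h H, lr * lp ^ (H - h')
      = ∑ i ∈ range (n+1), lr * lp ^ (n - i) := by
    rw [← Finset.Ico_add_one_right_eq_Icc, Finset.sum_Ico_eq_sum_range]
    have h1 : H + 1 - h = n + 1 := by omega
    rw [h1]
    refine Finset.sum_congr rfl fun i _ => ?_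
    have : H - (h + i) = n - i := by omega
    rw [this]
  have hR : ∑ h' ∈ Icc (h+1) H, lr * lp ^ (H - h')
      = ∑ i ∈ range n, lr * lp ^ (n - 1 - i) := by
    rw [← Finset.Ico_add_one_right_eq_Icc, Finset.sum_Ico_eq_sum_range]
    have h1 : H + 1 - (h + 1) = n := by omega
    rw [h1]
    refine Finset.sum_congr rfl fun i _ => ?_
    have : H - (h + 1 + i) = n - 1 - i := by omega
    rw [this]
  have e1 : ∑ i ∈ range (n+1), lr * lp ^ (n - i)
      = ∑ i ∈ range (n+1), lr * lp ^ i := by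
    have := Finset.sum_range_reflect (fun i => lr * lp ^ i) (n+1)
    simpa using this
  have e2 : ∑ i ∈ range n, lr * lp ^ (n - 1 - i)
      = ∑ i ∈ range n, lr * lp ^ i :=
    Finset.sum_range_reflect (fun i => lr * lp ^ i) n
  rw [hL, hR, e1, e2, Finset.sum_range_succ']
  have h3 : ∀ i, lr * lp ^ (i + 1) = lp * (lr * lp ^ i) := fun i => by ring
  simp_rw [h3]
  rw [← Finset.mul_sum, pow_zero, mul_one]
  ring

/-- In a Lipschitz finite-horizon MDP (rewards `λ_r`-Lipschitz, transitions
`λ_p`-Lipschitz in 1-Wasserstein distance, stated in Kantorovich dual form, with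
the sum metric on the state-action space), the optimal Q-functions `Q_h*` are
`L_h`-Lipschitz with `L_h = Σ_{h'=h}^H λ_r λ_p^{H−h'}`. -/
theorem lipschitz_mdp_optimal_Q_lipschitz
    {X A : Type*} [MetricSpace X] [MetricSpace A] [Nonempty A]
    [MeasurableSpace X] [BorelSpace X]
    (H : ℕ) (hH : 1 ≤ H) (lr lp : ℝ) (hlr : 0 ≤ lr) (hlp : 0 ≤ lp)
    (r : ℕ → X × A → ℝ) (P : ℕ → X × A → Measure X)
    [hP : ∀ h p, IsProbabilityMeasure (P h p)]
    (hr01 : ∀ h, h ∈ Icc 1 H → ∀ p, r h p ∈ Set.Icc (0 : ℝ) 1)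
    (hrLip : ∀ h, h ∈ Icc 1 H → ∀ p q,
      |r h p - r h q| ≤ lr * (dist p.1 q.1 + dist p.2 q.2))
    (hPLip : ∀ h, h ∈ Icc 1 H → ∀ f : X → ℝ, LipschitzWith 1 f →
      (∃ Cb, ∀ y, |f y| ≤ Cb) → ∀ p q,
        ∫ y, f y ∂(P h p) - ∫ y, f y ∂(P h q) ≤
          lp * (dist p.1 q.1 + dist p.2 q.2))
    (Q : ℕ → X × A → ℝ) (V : ℕ → X → ℝ)
    (hVmeas : ∀ h, Measurable (V h))
    (hV : ∀ h x, V h x = ⨆ a, Q h (x, a))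
    (hQH : ∀ p, Q H p = r H p)
    (hQ : ∀ h, 1 ≤ h → h < H → ∀ p, Q h p = r h p + ∫ y, V (h + 1) y ∂(P h p)) :
    ∀ h, h ∈ Icc 1 H → ∀ p q,
      |Q h p - Q h q| ≤
        (∑ h' ∈ Icc h H, lr * lp ^ (H - h')) * (dist p.1 q.1 + dist p.2 q.2) := by
  suffices key : ∀ k h, 1 ≤ h → h ≤ H → H - h = k →
      (∀ p, 0 ≤ Q h p ∧ Q h p ≤ ((H + 1 - h : ℕ) : ℝ)) ∧
      (∀ p q : X × A, |Q h p - Q h q| ≤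
        (∑ h' ∈ Icc h H, lr * lp ^ (H - h')) * (dist p.1 q.1 + dist p.2 q.2)) by
    intro h hh p q
    rw [mem_Icc] at hh
    exact (key (H - h) h hh.1 hh.2 rfl).2 p q
  intro k
  induction k with
  | zero =>
    intro h h1 hhH hk
    have hhH' : h = H := by omega
    subst hhH'
    constructor
    · intro p
      have hr' := hr01 h (mem_Icc.mpr ⟨h1, le_rfl⟩) p
      constructor
      · rw [hQH]; exact hr'.1
      · rw [hQH]
        have hc : ((h + 1 - h : ℕ) : ℝ) = 1 := by
          have : h + 1 - h = 1 := by omega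
          rw [this]; norm_num
        rw [hc]
        exact hr'.2
    · intro p q
      rw [hQH, hQH]
      have hs : ∑ h' ∈ Icc h h, lr * lp ^ (h - h') = lr := by
        simp
      rw [hs]
      exact hrLip h (mem_Icc.mpr ⟨h1, le_rfl⟩) p q
  | succ k ih =>
    intro h h1 hhH hk
    have hlt : h < H := by omega
    obtain ⟨ihB, ihL⟩ := ih (h + 1) (by omega) (by omega) (by omega)
    have hmem : h ∈ Icc 1 H := mem_Icc.mpr ⟨h1, le_of_lt hlt⟩
    -- bound constant for V (h+1)
    set C : ℝ := ((H - h : ℕ) : ℝ) with hC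
    have hCnn : 0 ≤ C := by positivity
    have hCeq : ((H + 1 - (h + 1) : ℕ) : ℝ) = C := by
      have : H + 1 - (h + 1) = H - h := by omega
      rw [this]
    -- Lipschitz constant for level h+1
    set L1 : ℝ := ∑ h' ∈ Icc (h+1) H, lr * lp ^ (H - h') with hL1
    have hL1nn : 0 ≤ L1 := by
      apply Finset.sum_nonneg
      intro i _
      positivity
    have hbdd : ∀ x : X, BddAbove (Set.range fun a => Q (h+1) (x, a)) := by
      intro x
      refine ⟨C, ?_⟩
      rintro _ ⟨a, rfl⟩
      calc Q (h+1) (x, a) ≤ ((H + 1 - (h + 1) : ℕ) : ℝ) := (ihB (x, a)).2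
        _ = C := hCeq
    have hV0 : ∀ x, 0 ≤ V (h+1) x := by
      intro x
      rw [hV]
      obtain ⟨a0⟩ := (inferInstance : Nonempty A)
      exact le_trans (ihB (x, a0)).1 (le_ciSup (hbdd x) a0)
    have hVC : ∀ x, V (h+1) x ≤ C := by
      intro x
      rw [hV]
      exact ciSup_le fun a => le_of_le_of_eq (ihB (x, a)).2 hCeq
    have hVlip : ∀ x y : X, |V (h+1) x - V (h+1) y| ≤ L1 * dist x y := by
      have hone : ∀ x y : X, V (h+1) x - V (h+1) y ≤ L1 * dist x y := by
        intro x y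
        rw [sub_le_iff_le_add, hV, hV]
        refine ciSup_le fun a => ?_
        have h2 := ihL (x, a) (y, a)
        simp only [dist_self, add_zero] at h2
        have h3 : Q (h+1) (x, a) ≤ Q (h+1) (y, a) + L1 * dist x y := by
          have := abs_le.mp h2
          linarith [this.2]
        exact le_trans h3 (by
          have := le_ciSup (hbdd y) a
          linarith)
      intro x y
      rw [abs_sub_le_iff]
      exact ⟨hone x y, by simpa [dist_comm] using hone y x⟩
    -- integrability
    have hint : ∀ pp : X × A, Integrable (V (h+1)) (P h pp) := by
      intro pp
      refine (integrable_const C).mono' (hVmeas (h+1)).aestronglyMeasurable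
        (ae_of_all _ fun y => ?_)
      rw [Real.norm_eq_abs, abs_of_nonneg (hV0 y)]
      exact hVC y
    -- key integral estimate
    have hI : ∀ pp qq : X × A,
        ∫ y, V (h+1) y ∂(P h pp) - ∫ y, V (h+1) y ∂(P h qq) ≤
          lp * L1 * (dist pp.1 qq.1 + dist pp.2 qq.2) := by
      intro pp qq
      have hd : 0 ≤ dist pp.1 qq.1 + dist pp.2 qq.2 := by positivity
      rcases eq_or_lt_of_le hL1nn with hz | hpos
      · -- L1 = 0 : V (h+1) is constant
        have hconst : ∀ y, V (h+1) y = V (h+1) pp.1 := by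
          intro y
          have := hVlip y pp.1
          rw [← hz] at this
          simp only [zero_mul] at this
          have := abs_nonpos_iff.mp (le_trans this le_rfl)
          linarith [sub_eq_zero.mp this]
        have heval : ∀ qq' : X × A, ∫ y, V (h+1) y ∂(P h qq') = V (h+1) pp.1 := by
          intro qq'
          rw [integral_congr_ae (ae_of_all _ hconst)]
          simp
        rw [heval pp, heval qq, sub_self, ← hz]
        positivity
      · -- L1 > 0, rescale
        set f : X → ℝ := fun y => L1⁻¹ * V (h+1) y with hf
        have hflip : LipschitzWith 1 f := by
          apply LipschitzWith.of_dist_le_mul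
          intro x y
          simp only [NNReal.coe_one, one_mul, Real.dist_eq]
          have : f x - f y = L1⁻¹ * (V (h+1) x - V (h+1) y) := by ring
          rw [this, abs_mul, abs_of_nonneg (inv_nonneg.mpr hL1nn)]
          calc L1⁻¹ * |V (h+1) x - V (h+1) y| ≤ L1⁻¹ * (L1 * dist x y) := by
                exact mul_le_mul_of_nonneg_left (hVlip x y) (inv_nonneg.mpr hL1nn)
            _ = dist x y := by field_simp
        have hfbd : ∃ Cb, ∀ y, |f y| ≤ Cb := by
          refine ⟨L1⁻¹ * C, fun y => ?_⟩
          rw [abs_mul, abs_of_nonneg (inv_nonneg.mpr hL1nn),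
            abs_of_nonneg (hV0 y)]
          exact mul_le_mul_of_nonneg_left (hVC y) (inv_nonneg.mpr hL1nn)
        have := hPLip h hmem f hflip hfbd pp qq
        have hfint : ∀ qq' : X × A,
            ∫ y, f y ∂(P h qq') = L1⁻¹ * ∫ y, V (h+1) y ∂(P h qq') := by
          intro qq'
          simp only [hf]
          exact integral_const_mul _ _
        rw [hfint pp, hfint qq] at this
        have h4 : L1⁻¹ * (∫ y, V (h+1) y ∂(P h pp) - ∫ y, V (h+1) y ∂(P h qq)) ≤
            lp * (dist pp.1 qq.1 + dist pp.2 qq.2) := by linarith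
        have h5 := mul_le_mul_of_nonneg_left h4 hL1nn
        rw [← mul_assoc, mul_inv_cancel₀ (ne_of_gt hpos), one_mul] at h5
        calc ∫ y, V (h+1) y ∂(P h pp) - ∫ y, V (h+1) y ∂(P h qq)
            ≤ L1 * (lp * (dist pp.1 qq.1 + dist pp.2 qq.2)) := h5
          _ = lp * L1 * (dist pp.1 qq.1 + dist pp.2 qq.2) := by ring
    constructor
    · -- bounds on Q h
      intro p
      rw [hQ h h1 hlt]
      have hI0 : 0 ≤ ∫ y, V (h+1) y ∂(P h p) :=
        integral_nonneg hV0
      have hIC : ∫ y, V (h+1) y ∂(P h p) ≤ C := by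
        calc ∫ y, V (h+1) y ∂(P h p) ≤ ∫ _, C ∂(P h p) :=
              integral_mono (hint p) (integrable_const C) hVC
          _ = C := by simp
      have hr := hr01 h hmem p
      constructor
      · linarith [hr.1]
      · have hcast : ((H + 1 - h : ℕ) : ℝ) = C + 1 := by
          have h6 : H + 1 - h = (H - h) + 1 := by omega
          rw [h6, hC]
          push_cast
          ring
        rw [hcast]
        linarith [hr.2]
    · -- Lipschitz bound
      intro p q
      rw [hQ h h1 hlt p, hQ h h1 hlt q]
      set d := dist p.1 q.1 + dist p.2 q.2 with hd
      have hdnn : 0 ≤ d := by positivity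
      have habsI : |∫ y, V (h+1) y ∂(P h p) - ∫ y, V (h+1) y ∂(P h q)| ≤
          lp * L1 * d := by
        rw [abs_sub_le_iff]
        refine ⟨hI p q, ?_⟩
        have := hI q p
        simpa [hd, dist_comm] using this
      have habr := hrLip h hmem p q
      have hsum := aux_sum_step_mdp lr lp hlt
      rw [hsum]
      calc |r h p + ∫ y, V (h+1) y ∂(P h p) - (r h q + ∫ y, V (h+1) y ∂(P h q))|
          ≤ |r h p - r h q| +
            |∫ y, V (h+1) y ∂(P h p) - ∫ y, V (h+1) y ∂(P h q)| := by
            have : r h p + ∫ y, V (h+1) y ∂(P h p) - (r h q + ∫ y, V (h+1) y ∂(P h q))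
                = (r h p - r h q) +
                  (∫ y, V (h+1) y ∂(P h p) - ∫ y, V (h+1) y ∂(P h q)) := by ring
            rw [this]
            exact abs_add_le _ _
        _ ≤ lr * d + lp * L1 * d := add_le_add habr habsI
        _ = (lr + lp * L1) * d := by ring
end
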